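/- Let x, y ∈ ℤ² be non-collinear with deg(x) = deg(y) = 1. If the triangle with vertices 0, x, x+y has no interior lattice points, then deg(x+y) = |det(x,y)|. -/

import Mathlib

/-!
Write `D = |det(x,y)|`. Since `x` is primitive, Bézout gives an integer `a`, which may be
reduced to `0 ≤ a < D`, with `a • x + y = D • p` for a lattice point `p`. Then
`p = (a/D) x + (1/D) y`, so for `a ≥ 2` the point `p` lies in the interior of the triangle
`0, x, x + y`. Hence `a = 0`, which forces `D ∣ deg y = 1`, or `a = 1`, i.e. `D ∣ x + y`.
Either way `D ∣ deg(x + y)`, while `deg(x + y) ∣ det(x + y, y) = det(x, y)`.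
-/

/-- The image of a lattice point in the real plane. -/
def toR2 (p : ℤ × ℤ) : ℝ × ℝ := ((p.1 : ℝ), (p.2 : ℝ))

/-- The triangle (convex hull) with vertices `0`, `x`, `x + y` in the real plane. -/
def tri (x y : ℤ × ℤ) : Set (ℝ × ℝ) := convexHull ℝ {(0 : ℝ × ℝ), toR2 x, toR2 (x + y)}

theorem smul_add_smul_mem_convexHull_zero_add {E : Type*} [AddCommGroup E] [Module ℝ E]
    (X Y : E) {u v : ℝ} (hv : 0 ≤ v) (hvu : v ≤ u) (hu : u ≤ 1) :
    u • X + v • Y ∈ convexHull ℝ {0, X, X + Y} := by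
  have hmem := (convex_convexHull ℝ ({0, X, X + Y} : Set E)).sum_mem
    (t := Finset.univ) (w := ![1 - u, u - v, v]) (z := ![0, X, X + Y])
    (fun i _ => by
      fin_cases i <;> simp only [Fin.zero_eta, Fin.mk_one, Fin.reduceFinMk, Matrix.cons_val] <;>
        linarith)
    (by simp [Fin.sum_univ_three])
    (fun i _ => subset_convexHull ℝ _ (by fin_cases i <;> simp))
  convert hmem using 1
  simp only [Fin.sum_univ_three, Matrix.cons_val]
  module

theorem smul_add_smul_mem_interior_convexHull_zero_add {E : Type*} [NormedAddCommGroup E]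
    [NormedSpace ℝ E] [FiniteDimensional ℝ E] (hE : Module.finrank ℝ E = 2) {X Y : E}
    (hXY : LinearIndependent ℝ ![X, Y]) {u v : ℝ} (hv : 0 < v) (hvu : v < u) (hu : u < 1) :
    u • X + v • Y ∈ interior (convexHull ℝ {0, X, X + Y}) := by
  let ψ : ℝ × ℝ →ₗ[ℝ] E :=
    (LinearMap.toSpanSingleton ℝ E X).coprod (LinearMap.toSpanSingleton ℝ E Y)
  have hinj : Function.Injective ψ := by
    rw [← LinearMap.ker_eq_bot, LinearMap.ker_eq_bot']
    intro w hw
    obtain ⟨h1, h2⟩ := LinearIndependent.pair_iff.mp hXY w.1 w.2 hw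
    exact Prod.ext h1 h2
  have hsurj : Function.Surjective ψ :=
    (LinearMap.injective_iff_surjective_of_finrank_eq_finrank (by simp [hE])).mp hinj
  let O : Set (ℝ × ℝ) := {w | 0 < w.2} ∩ {w | w.2 < w.1} ∩ {w | w.1 < 1}
  have hO : IsOpen O :=
    ((isOpen_lt continuous_const continuous_snd).inter
      (isOpen_lt continuous_snd continuous_fst)).inter (isOpen_lt continuous_fst continuous_const)
  refine interior_maximal ?_ (LinearMap.isOpenMap_of_finiteDimensional ψ hsurj O hO)
    ⟨(u, v), ⟨⟨hv, hvu⟩, hu⟩, rfl⟩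
  rintro _ ⟨w, ⟨⟨hw1, hw2⟩, hw3⟩, rfl⟩
  exact smul_add_smul_mem_convexHull_zero_add X Y hw1.le hw2.le hw3.le

theorem toR2_add (p q : ℤ × ℤ) : toR2 (p + q) = toR2 p + toR2 q := by
  ext <;> simp [toR2]

theorem toR2_zsmul (n : ℤ) (p : ℤ × ℤ) : toR2 (n • p) = (n : ℝ) • toR2 p := by
  ext <;> simp [toR2]

theorem linearIndependent_toR2 {x y : ℤ × ℤ} (h : x.1 * y.2 - x.2 * y.1 ≠ 0) :
    LinearIndependent ℝ ![toR2 x, toR2 y] := by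
  have hR : (x.1 * y.2 - x.2 * y.1 : ℝ) ≠ 0 := by exact_mod_cast h
  refine LinearIndependent.pair_iff.mpr fun s t hst => ?_
  have h1 : s * x.1 + t * y.1 = 0 := by simpa [toR2] using congrArg Prod.fst hst
  have h2 : s * x.2 + t * y.2 = 0 := by simpa [toR2] using congrArg Prod.snd hst
  constructor
  · refine (mul_eq_zero.mp ?_).resolve_right hR
    linear_combination (y.2 : ℝ) * h1 - (y.1 : ℝ) * h2
  · refine (mul_eq_zero.mp ?_).resolve_right hR
    linear_combination (x.1 : ℝ) * h2 - (x.2 : ℝ) * h1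

theorem toR2_mem_interior_tri_of_zsmul_eq {x y p : ℤ × ℤ} (h : x.1 * y.2 - x.2 * y.1 ≠ 0)
    {n a : ℤ} (hp : n • p = a • x + y) (h1a : 1 < a) (han : a < n) :
    toR2 p ∈ interior (tri x y) := by
  have hn : (0 : ℝ) < n := by exact_mod_cast (h1a.trans han).trans' one_pos
  have hpR : toR2 p = ((a : ℝ) / n) • toR2 x + (1 / (n : ℝ)) • toR2 y := by
    have := congrArg toR2 hp
    rw [toR2_zsmul, toR2_add, toR2_zsmul] at this
    rw [div_eq_inv_mul, div_eq_inv_mul, mul_smul, mul_smul, ← smul_add, one_smul, ← this,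
      smul_smul, inv_mul_cancel₀ hn.ne', one_smul]
  rw [hpR, tri, toR2_add]
  refine smul_add_smul_mem_interior_convexHull_zero_add (by simp) (linearIndependent_toR2 h)
    (by positivity) ?_ ?_
  · gcongr
    exact_mod_cast h1a
  · rw [div_lt_one hn]
    exact_mod_cast han

theorem exists_smul_add_eq_det_smul {x : ℤ × ℤ} (hx : Int.gcd x.1 x.2 = 1) (y : ℤ × ℤ) :
    ∃ (a : ℤ) (p : ℤ × ℤ), a • x + y = (x.1 * y.2 - x.2 * y.1) • p := by
  have hbez : x.1 * Int.gcdA x.1 x.2 + x.2 * Int.gcdB x.1 x.2 = 1 := by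
    rw [← Int.gcd_eq_gcd_ab, hx, Nat.cast_one]
  set s := Int.gcdA x.1 x.2
  set t := Int.gcdB x.1 x.2
  refine ⟨-(s * y.1 + t * y.2), (-t, s), Prod.ext ?_ ?_⟩
  · simp only [Prod.fst_add, Prod.smul_fst, smul_eq_mul]
    linear_combination (-y.1) * hbez
  · simp only [Prod.snd_add, Prod.smul_snd, smul_eq_mul]
    linear_combination (-y.2) * hbez

theorem exists_smul_add_eq_natAbs_smul {x y : ℤ × ℤ} {d a₀ : ℤ} {p₀ : ℤ × ℤ} (hd : d ≠ 0)
    (h : a₀ • x + y = d • p₀) :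
    ∃ (a : ℤ) (p : ℤ × ℤ), 0 ≤ a ∧ a < d.natAbs ∧ (d.natAbs : ℤ) • p = a • x + y := by
  have hn : (0 : ℤ) < d.natAbs := by omega
  refine ⟨a₀ % d.natAbs, d.sign • p₀ - (a₀ / d.natAbs) • x, Int.emod_nonneg _ hn.ne',
    Int.emod_lt_of_pos _ hn, ?_⟩
  rw [smul_sub, smul_smul, smul_smul, mul_comm _ d.sign, Int.sign_mul_natAbs, ← h,
    Int.emod_def, sub_smul]
  abel

theorem gcd_zsmul (n : ℤ) (q : ℤ × ℤ) :
    Int.gcd (n • q).1 (n • q).2 = n.natAbs * Int.gcd q.1 q.2 :=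
  Int.gcd_mul_left n q.1 q.2

theorem gcd_add_dvd_natAbs_det (x y : ℤ × ℤ) :
    Int.gcd (x + y).1 (x + y).2 ∣ (x.1 * y.2 - x.2 * y.1).natAbs := by
  rw [← Int.ofNat_dvd_left, show x.1 * y.2 - x.2 * y.1 = (x + y).1 * y.2 - (x + y).2 * y.1 by
    simp only [Prod.fst_add, Prod.snd_add]; ring]
  exact dvd_sub ((Int.gcd_dvd_left _ _).mul_right _) ((Int.gcd_dvd_right _ _).mul_right _)

/-- If `x, y` are non-collinear with `deg x = deg y = 1` and the triangle with vertices
`0, x, x+y` has no interior lattice points, then `deg (x+y) = |det(x,y)|`. -/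
theorem deg_add_eq_det_of_no_interior_point (x y : ℤ × ℤ)
    (h : x.1 * y.2 - x.2 * y.1 ≠ 0)
    (hx : Int.gcd x.1 x.2 = 1) (hy : Int.gcd y.1 y.2 = 1)
    (hempty : ∀ p : ℤ × ℤ, toR2 p ∉ interior (tri x y)) :
    Int.gcd (x + y).1 (x + y).2 = (x.1 * y.2 - x.2 * y.1).natAbs := by
  set D := (x.1 * y.2 - x.2 * y.1).natAbs
  obtain ⟨a₀, p₀, hp₀⟩ := exists_smul_add_eq_det_smul hx y
  obtain ⟨a, p, ha0, haD, hp⟩ := exists_smul_add_eq_natAbs_smul h hp₀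
  obtain ⟨q, hq⟩ : ∃ q, x + y = (D : ℤ) • q := by
    rcases (show a = 0 ∨ a = 1 ∨ 1 < a by omega) with rfl | rfl | h1a
    · have hD : D = 1 := by
        rw [zero_smul, zero_add] at hp
        rw [← hp, gcd_zsmul, Int.natAbs_natCast] at hy
        exact Nat.eq_one_of_mul_eq_one_right hy
      exact ⟨x + y, by rw [hD, Nat.cast_one, one_smul]⟩
    · exact ⟨p, by rw [hp, one_smul]⟩
    · exact (hempty p (toR2_mem_interior_tri_of_zsmul_eq h hp h1a haD)).elim
  refine Nat.dvd_antisymm (gcd_add_dvd_natAbs_det x y) ?_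
  rw [hq, gcd_zsmul, Int.natAbs_natCast]
  exact dvd_mul_right D _
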